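/- arXiv:1509.02086 — 2 statements merged into one kernel-verified Lean document; each statement's English description precedes it below -/
import Mathlib

section
/- Let Γ ∈ ℝ^{n×ν} with k = rank Γ and A = [α_{ij}] ∈ ℤ≥0^{n×ν}. Suppose that for every ρ ∈ ℝ^{ν×n} with ρ_{ji} ≥ 0 for α_{ij} > 0 and ρ_{ji} = 0 for α_{ij} = 0, every principal minor of −Γρ is nonnegative (P₀ property). If for some such ρ₀ with ρ₀_{ji} > 0 for all (i,j) with α_{ij} > 0 the sum of all k×k principal minors of −Γρ₀ is positive, then this sum is positive for every such ρ whose supported entries are all strictly positive; in particular, for every admissible kinetics R ∈ K_A and every x in the open positive orthant, the sum of all k×k principal minors of −Γ(∂R/∂x)(x) is positive. -/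
open Filter Set Topology

/-- Partial derivative ∂R_j/∂x_i at x. -/
noncomputable def pd {n ν : ℕ} (R : (Fin n → ℝ) → Fin ν → ℝ)
    (x : Fin n → ℝ) (j : Fin ν) (i : Fin n) : ℝ :=
  fderiv ℝ (fun y => R y j) x (Pi.single i 1)

/-- Admissible kinetics (A1)-(A4) for a reactant matrix `A`. -/
structure IsAdmissible {n ν : ℕ} (A : Matrix (Fin n) (Fin ν) ℕ)
    (R : (Fin n → ℝ) → Fin ν → ℝ) : Prop where
  smooth : ContDiff ℝ 1 R
  nonneg : ∀ x, (∀ i, 0 ≤ x i) → ∀ j, 0 ≤ R x j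
  vanish : ∀ x, (∀ i, 0 ≤ x i) → ∀ i j, 0 < A i j → x i = 0 → R x j = 0
  deriv_nonneg : ∀ x, (∀ i, 0 ≤ x i) → ∀ i j, 0 < A i j → 0 ≤ pd R x j i
  deriv_zero : ∀ x, (∀ i, 0 ≤ x i) → ∀ i j, A i j = 0 → pd R x j i = 0
  deriv_pos : ∀ x, (∀ i, 0 < x i) → ∀ i j, 0 < A i j → 0 < pd R x j i

/-- Upper (right) Dini derivative of `V` along the vector field `f` at `x`,
`D⁺V(x) = limsup_{h→0⁺} (V(x + h f(x)) − V(x))/h`. -/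
noncomputable def dini {m : ℕ} (V : (Fin m → ℝ) → ℝ)
    (f : (Fin m → ℝ) → (Fin m → ℝ)) (x : Fin m → ℝ) : ℝ :=
  Filter.limsup (fun h : ℝ => (V (x + h • f x) - V x) / h) (nhdsWithin 0 (Set.Ioi 0))

/-- The rank-one matrix `Γ^ℓ = e_j γ_iᵀ ∈ ℝ^{ν×ν}`. -/
noncomputable def GammaEll {n ν : ℕ} (Γ : Matrix (Fin n) (Fin ν) ℝ) (i : Fin n) (j : Fin ν) :
    Matrix (Fin ν) (Fin ν) ℝ :=
  Matrix.vecMulVec (Pi.single j 1) (fun k => Γ i k)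

/-- Principal minor of `M` with rows and columns indexed by `I`. -/
noncomputable def pminor {m : ℕ} (M : Matrix (Fin m) (Fin m) ℝ) (I : Finset (Fin m)) : ℝ :=
  (M.submatrix (fun i : {x : Fin m // x ∈ I} => (i : Fin m))
    (fun i : {x : Fin m // x ∈ I} => (i : Fin m))).det

/-!
A principal minor of `-(Γ * ρ)` is multilinear in the columns of `ρ`. Split a strictly
positive pattern `ρ` as `(ρ - c • ρ₀) + c • ρ₀` with `c > 0` so small that both summands are
nonnegative patterns. Expanding a minor over the choices of columns gives minors of mixed
nonnegative patterns, all `≥ 0` by P₀, plus the minor at `c • ρ₀`. So each `k × k` principal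
minor at `ρ` dominates `c ^ k` times the one at `ρ₀`, and the positive sum at `ρ₀` forces a
positive sum at `ρ`.
-/

namespace MultilinearMap

variable {R ι M₂ : Type*} {M₁ : ι → Type*} [Semiring R] [∀ i, AddCommMonoid (M₁ i)]
  [∀ i, Module R (M₁ i)] [AddCommMonoid M₂] [PartialOrder M₂] [IsOrderedAddMonoid M₂]
  [Module R M₂] [DecidableEq ι] [Fintype ι]

theorem map_le_map_add_of_piecewise_nonneg (f : MultilinearMap R M₁ M₂) (m m' : ∀ i, M₁ i)
    (h : ∀ s : Finset ι, 0 ≤ f (s.piecewise m m')) : f m' ≤ f (m + m') := by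
  rw [f.map_add_univ]
  simpa only [Finset.piecewise_empty] using
    Finset.single_le_sum (f := fun s => f (s.piecewise m m')) (fun s _ => h s)
      (Finset.mem_univ ∅)

end MultilinearMap

namespace Matrix

variable {R ι κ : Type*} [DecidableEq ι]

def piecewiseCols (s : Finset ι) (C D : Matrix κ ι R) : Matrix κ ι R :=
  of fun k i => if i ∈ s then C k i else D k i

theorem transpose_piecewiseCols (s : Finset ι) (C D : Matrix κ ι R) :
    (piecewiseCols s C D)ᵀ = s.piecewise Cᵀ Dᵀ := by
  ext i k
  by_cases hi : i ∈ s <;> simp [piecewiseCols, Finset.piecewise, hi]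

theorem submatrix_piecewiseCols {ι' : Type*} [DecidableEq ι'] (e : ι' ↪ ι) (s : Finset ι')
    (C D : Matrix κ ι R) :
    (piecewiseCols (s.map e) C D).submatrix id e =
      piecewiseCols s (C.submatrix id e) (D.submatrix id e) := by
  ext k i
  simp [piecewiseCols]

variable [Fintype ι] [Fintype κ] [CommRing R] [PartialOrder R] [IsOrderedAddMonoid R]

theorem det_mul_le_det_mul_add (B : Matrix ι κ R) (C D : Matrix κ ι R)
    (h : ∀ s : Finset ι, 0 ≤ (B * piecewiseCols s C D).det) :
    (B * D).det ≤ (B * (C + D)).det := by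
  let f := (detRowAlternating : (ι → R) [⋀^ι]→ₗ[R] R).toMultilinearMap.compLinearMap
    fun _ => B.mulVecLin
  -- the rows of `(B * X)ᵀ` are the images under `B` of the columns of `X`
  have hf : ∀ X : Matrix κ ι R, (B * X).det = f Xᵀ := fun X => (det_transpose _).symm
  rw [hf, hf, transpose_add]
  refine f.map_le_map_add_of_piecewise_nonneg _ _ fun s => ?_
  rw [← transpose_piecewiseCols, ← hf]
  exact h s

end Matrix

section Patterns

variable {n ν : ℕ} (A : Matrix (Fin n) (Fin ν) ℕ)

def IsNonnegPattern (ρ : Matrix (Fin ν) (Fin n) ℝ) : Prop :=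
  ∀ i j, (0 < A i j → 0 ≤ ρ j i) ∧ (A i j = 0 → ρ j i = 0)

def IsPosPattern (ρ : Matrix (Fin ν) (Fin n) ℝ) : Prop :=
  ∀ i j, (0 < A i j → 0 < ρ j i) ∧ (A i j = 0 → ρ j i = 0)

variable {A}

theorem IsNonnegPattern.piecewiseCols {σ τ : Matrix (Fin ν) (Fin n) ℝ}
    (hσ : IsNonnegPattern A σ) (hτ : IsNonnegPattern A τ) (s : Finset (Fin n)) :
    IsNonnegPattern A (Matrix.piecewiseCols s σ τ) := fun i j => by
  by_cases hi : i ∈ s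
  · simpa [Matrix.piecewiseCols, hi] using hσ i j
  · simpa [Matrix.piecewiseCols, hi] using hτ i j

theorem IsPosPattern.isNonnegPattern_smul {ρ : Matrix (Fin ν) (Fin n) ℝ}
    (hρ : IsPosPattern A ρ) {c : ℝ} (hc : 0 ≤ c) : IsNonnegPattern A (c • ρ) := fun i j =>
  ⟨fun hA => mul_nonneg hc ((hρ i j).1 hA).le, fun hA => by simp [(hρ i j).2 hA]⟩

theorem IsPosPattern.exists_pos_isNonnegPattern_sub_smul {ρ ρ₀ : Matrix (Fin ν) (Fin n) ℝ}
    (hρ : IsPosPattern A ρ) (hρ₀ : IsPosPattern A ρ₀) :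
    ∃ c : ℝ, 0 < c ∧ IsNonnegPattern A (ρ - c • ρ₀) := by
  have hsmall : ∀ᶠ c in 𝓝[>] (0 : ℝ), ∀ i j, 0 < A i j → c * ρ₀ j i ≤ ρ j i := by
    simp only [eventually_all]
    intro i j hA
    have hlim : Tendsto (fun c : ℝ => c * ρ₀ j i) (𝓝[>] 0) (𝓝 0) := by
      simpa using
        ((tendsto_id (x := 𝓝 (0 : ℝ))).mul_const (ρ₀ j i)).mono_left nhdsWithin_le_nhds
    exact hlim.eventually (ge_mem_nhds ((hρ i j).1 hA))
  obtain ⟨c, hle, hc⟩ := (hsmall.and self_mem_nhdsWithin).exists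
  refine ⟨c, hc, fun i j => ⟨fun hA => ?_, fun hA => ?_⟩⟩
  · simpa using hle i j hA
  · simp [(hρ i j).2 hA, (hρ₀ i j).2 hA]

theorem IsAdmissible.isPosPattern_pd {R : (Fin n → ℝ) → Fin ν → ℝ} (hR : IsAdmissible A R)
    {x : Fin n → ℝ} (hx : ∀ i, 0 < x i) :
    IsPosPattern A (Matrix.of fun j i => pd R x j i) := fun i j =>
  ⟨hR.deriv_pos x hx i j, hR.deriv_zero x (fun i => (hx i).le) i j⟩

end Patterns

section PrincipalMinors

variable {n ν : ℕ}

theorem pminor_smul (M : Matrix (Fin n) (Fin n) ℝ) (c : ℝ) (I : Finset (Fin n)) :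
    pminor (c • M) I = c ^ I.card * pminor M I := by
  rw [pminor, pminor, ← Fintype.card_coe, ← Matrix.det_smul]
  rfl

theorem pminor_neg_mul (Γ : Matrix (Fin n) (Fin ν) ℝ) (ρ : Matrix (Fin ν) (Fin n) ℝ)
    (I : Finset (Fin n)) :
    pminor (-(Γ * ρ)) I =
      ((-Γ).submatrix (Subtype.val : I → Fin n) id * ρ.submatrix id Subtype.val).det := by
  rw [pminor, ← Matrix.neg_mul, Matrix.submatrix_mul _ _ _ _ _ Function.bijective_id]

theorem pminor_neg_mul_le_add {A : Matrix (Fin n) (Fin ν) ℕ} {Γ : Matrix (Fin n) (Fin ν) ℝ}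
    (hP0 : ∀ ρ, IsNonnegPattern A ρ → ∀ I, 0 ≤ pminor (-(Γ * ρ)) I)
    {σ τ : Matrix (Fin ν) (Fin n) ℝ} (hσ : IsNonnegPattern A σ) (hτ : IsNonnegPattern A τ)
    (I : Finset (Fin n)) :
    pminor (-(Γ * τ)) I ≤ pminor (-(Γ * (σ + τ))) I := by
  rw [pminor_neg_mul, pminor_neg_mul, Matrix.submatrix_add]
  refine Matrix.det_mul_le_det_mul_add _ _ _ fun s => ?_
  have := hP0 _ (hσ.piecewiseCols hτ (s.map (Function.Embedding.subtype _))) I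
  rwa [pminor_neg_mul, ← Function.Embedding.coe_subtype, Matrix.submatrix_piecewiseCols] at this

noncomputable def sumPrincipalMinors (M : Matrix (Fin n) (Fin n) ℝ) (k : ℕ) : ℝ :=
  ∑ I ∈ Finset.univ.filter (fun I : Finset (Fin n) => I.card = k), pminor M I

theorem sumPrincipalMinors_smul (M : Matrix (Fin n) (Fin n) ℝ) (c : ℝ) (k : ℕ) :
    sumPrincipalMinors (c • M) k = c ^ k * sumPrincipalMinors M k := by
  rw [sumPrincipalMinors, sumPrincipalMinors, Finset.mul_sum]
  refine Finset.sum_congr rfl fun I hI => ?_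
  rw [pminor_smul, (Finset.mem_filter.mp hI).2]

theorem sumPrincipalMinors_pos_of_isPosPattern {A : Matrix (Fin n) (Fin ν) ℕ}
    {Γ : Matrix (Fin n) (Fin ν) ℝ}
    (hP0 : ∀ ρ, IsNonnegPattern A ρ → ∀ I, 0 ≤ pminor (-(Γ * ρ)) I)
    {ρ₀ : Matrix (Fin ν) (Fin n) ℝ} (hρ₀ : IsPosPattern A ρ₀) {k : ℕ}
    (hpos : 0 < sumPrincipalMinors (-(Γ * ρ₀)) k) {ρ : Matrix (Fin ν) (Fin n) ℝ}
    (hρ : IsPosPattern A ρ) : 0 < sumPrincipalMinors (-(Γ * ρ)) k := by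
  obtain ⟨c, hc, hsub⟩ := hρ.exists_pos_isNonnegPattern_sub_smul hρ₀
  have hscale : sumPrincipalMinors (-(Γ * (c • ρ₀))) k =
      c ^ k * sumPrincipalMinors (-(Γ * ρ₀)) k := by
    rw [Matrix.mul_smul, ← smul_neg, sumPrincipalMinors_smul]
  calc 0 < sumPrincipalMinors (-(Γ * (c • ρ₀))) k := hscale ▸ mul_pos (pow_pos hc k) hpos
    _ ≤ sumPrincipalMinors (-(Γ * (ρ - c • ρ₀ + c • ρ₀))) k :=
      Finset.sum_le_sum fun I _ =>
        pminor_neg_mul_le_add hP0 hsub (hρ₀.isNonnegPattern_smul hc.le) I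
    _ = sumPrincipalMinors (-(Γ * ρ)) k := by rw [sub_add_cancel]

end PrincipalMinors

/-- Theorem 5.1 (Robust Nonsingularity): under the P₀ property, positivity of the sum
of the `k×k` principal minors (`k = rank Γ`) of `−Γρ₀` at one strictly positive
admissible pattern `ρ₀` implies its positivity at every such pattern; in particular at
the Jacobian `−Γ ∂R/∂x(x)` of every admissible kinetics at every point of the open
positive orthant. -/
theorem stmt9 {n ν : ℕ} (A : Matrix (Fin n) (Fin ν) ℕ)
    (Γ : Matrix (Fin n) (Fin ν) ℝ)
    (hP0 : ∀ ρ : Matrix (Fin ν) (Fin n) ℝ,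
      (∀ i j, (0 < A i j → 0 ≤ ρ j i) ∧ (A i j = 0 → ρ j i = 0)) →
      ∀ I : Finset (Fin n), 0 ≤ pminor (-(Γ * ρ)) I)
    (ρ₀ : Matrix (Fin ν) (Fin n) ℝ)
    (hρ₀ : ∀ i j, (0 < A i j → 0 < ρ₀ j i) ∧ (A i j = 0 → ρ₀ j i = 0))
    (hpos : 0 < ∑ I ∈ Finset.univ.filter (fun I : Finset (Fin n) => I.card = Γ.rank),
        pminor (-(Γ * ρ₀)) I) :
    (∀ ρ : Matrix (Fin ν) (Fin n) ℝ,
      (∀ i j, (0 < A i j → 0 < ρ j i) ∧ (A i j = 0 → ρ j i = 0)) →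
      0 < ∑ I ∈ Finset.univ.filter (fun I : Finset (Fin n) => I.card = Γ.rank),
        pminor (-(Γ * ρ)) I)
    ∧ (∀ R, IsAdmissible A R → ∀ x : Fin n → ℝ, (∀ i, 0 < x i) →
      0 < ∑ I ∈ Finset.univ.filter (fun I : Finset (Fin n) => I.card = Γ.rank),
        pminor (-(Γ * Matrix.of fun (j : Fin ν) (i : Fin n) => pd R x j i)) I) := by
  have robust : ∀ ρ, IsPosPattern A ρ → 0 < sumPrincipalMinors (-(Γ * ρ)) Γ.rank :=
    fun _ hρ => sumPrincipalMinors_pos_of_isPosPattern hP0 hρ₀ hpos hρ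
  exact ⟨robust, fun R hR x hx => robust _ (hR.isPosPattern_pd hx)⟩
end

section
/- Let B ∈ ℝ^{q×n}, let D be a matrix whose columns form a basis of ker Γᵀ, and suppose that for every ℓ = 1,…,s there exist Λ̃^ℓ ∈ ℝ^{q×q} with μ_∞(Λ̃^ℓ) := max_k ( Λ̃^ℓ_{kk} + Σ_{j≠k} |Λ̃^ℓ_{kj}| ) ≤ 0 and a matrix Y^ℓ such that B (Γ e_{j_ℓ}) e_{i_ℓ}ᵀ = Λ̃^ℓ B + Y^ℓ Dᵀ, where Γ e_j is the j-th column of Γ and e_i the i-th standard basis vector of ℝⁿ. Then for every admissible kinetics R ∈ K_A and every x ∈ ℝ≥0ⁿ, the matrix J₂(x) = Γ (∂R/∂x)(x) ∈ ℝ^{n×n} satisfies limsup_{h→0⁺} (1/h) ( sup{ ‖B (I + h J₂(x)) z‖_∞ : z ∈ im Γ, ‖B z‖_∞ ≤ 1 } − 1 ) ≤ 0; in particular, for every h ≥ 0 and every z ∈ im Γ, ‖B(I + h J₂(x)) z‖_∞ ≤ ‖I + h Σ_ℓ ρ_ℓ Λ̃^ℓ‖_∞ ‖B z‖_∞ with ρ_ℓ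 = ∂R_{j_ℓ}/∂x_{i_ℓ}(x) ≥ 0, where ‖·‖_∞ on matrices denotes the operator norm induced by the ℓ∞ vector norm. -/
open Filter Set Topology

/-- Operator norm on square matrices induced by the ℓ∞ vector norm. -/
noncomputable def opNormInf {q : ℕ} (M : Matrix (Fin q) (Fin q) ℝ) : ℝ :=
  sSup {a : ℝ | ∃ v : Fin q → ℝ, ‖v‖ ≤ 1 ∧ a = ‖M.mulVec v‖}

/-!
For `z ∈ im Γ ⊆ ker Dᵀ` the factorizations `B (Γ e_j) e_iᵀ = Λ̃ B + Y Dᵀ` give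
`B J₂ z = M (B z)` with `M = Σ_ℓ ρ_ℓ Λ̃^ℓ`, hence `B (I + h J₂) z = (I + h M) (B z)`.
Matrices with `μ_∞ ≤ 0` form a convex cone and `ρ_ℓ ≥ 0`, so `μ_∞(M) ≤ 0`. Once `h` is small
enough that the diagonal of `I + h M` is nonnegative, the absolute row sums of `I + h M` are
`1 + h (M_kk + Σ_{k'≠k} |M_kk'|) ≤ 1`, so `‖I + h M‖_∞ ≤ 1` and the difference quotient is `≤ 0`.
-/

namespace Matrix

variable {l m n ν q d : Type*} [Fintype m] [Fintype n] [Fintype ν]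

theorem norm_mulVec_le_of_sum_abs_le [Fintype l] (N : Matrix l m ℝ) {c : ℝ} (hc : 0 ≤ c)
    (hN : ∀ k, ∑ j, |N k j| ≤ c) (v : m → ℝ) : ‖N *ᵥ v‖ ≤ c * ‖v‖ := by
  refine (pi_norm_le_iff_of_nonneg (mul_nonneg hc (norm_nonneg v))).2 fun k => ?_
  calc ‖(N *ᵥ v) k‖ = |∑ j, N k j * v j| := rfl
    _ ≤ ∑ j, |N k j| * ‖v‖ := by
        refine (Finset.abs_sum_le_sum_abs _ _).trans (Finset.sum_le_sum fun j _ => ?_)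
        rw [abs_mul]
        exact mul_le_mul_of_nonneg_left (norm_le_pi_norm v j) (abs_nonneg _)
    _ ≤ c * ‖v‖ := by
        rw [← Finset.sum_mul]
        exact mul_le_mul_of_nonneg_right (hN k) (norm_nonneg v)

section LinftyOpNorm

attribute [local instance] Matrix.linftyOpNormedAddCommGroup

theorem norm_mulVec_le_opNormInf {p : ℕ} (N : Matrix (Fin p) (Fin p) ℝ) (v : Fin p → ℝ) :
    ‖N *ᵥ v‖ ≤ opNormInf N * ‖v‖ := by
  have hbdd : BddAbove {a : ℝ | ∃ w : Fin p → ℝ, ‖w‖ ≤ 1 ∧ a = ‖N *ᵥ w‖} := by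
    refine ⟨‖N‖, ?_⟩
    rintro _ ⟨w, hw, rfl⟩
    exact (linfty_opNorm_mulVec N w).trans (mul_le_of_le_one_right (norm_nonneg N) hw)
  rcases eq_or_ne v 0 with rfl | hv
  · simp
  have hv0 : 0 < ‖v‖ := norm_pos_iff.2 hv
  have hunit : ‖N *ᵥ (‖v‖⁻¹ • v)‖ ≤ opNormInf N :=
    le_csSup hbdd ⟨_, by rw [norm_smul, norm_inv, norm_norm, inv_mul_cancel₀ hv0.ne'], rfl⟩
  rw [mulVec_smul, norm_smul, norm_inv, norm_norm, inv_mul_le_iff₀ hv0] at hunit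
  linarith

end LinftyOpNorm

def LogNormInfNonpos [DecidableEq m] (M : Matrix m m ℝ) : Prop :=
  ∀ k, M k k + ∑ k' ∈ Finset.univ.erase k, |M k k'| ≤ 0

namespace LogNormInfNonpos

variable [DecidableEq m]

theorem zero : LogNormInfNonpos (0 : Matrix m m ℝ) := fun k => by simp

theorem add {M N : Matrix m m ℝ} (hM : LogNormInfNonpos M) (hN : LogNormInfNonpos N) :
    LogNormInfNonpos (M + N) := fun k => by
  have hoff : ∑ k' ∈ Finset.univ.erase k, |(M + N) k k'| ≤
      ∑ k' ∈ Finset.univ.erase k, |M k k'| + ∑ k' ∈ Finset.univ.erase k, |N k k'| := by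
    rw [← Finset.sum_add_distrib]
    exact Finset.sum_le_sum fun k' _ => abs_add_le _ _
  have := hM k
  have := hN k
  simp only [add_apply] at hoff ⊢
  linarith

theorem smul {M : Matrix m m ℝ} (hM : LogNormInfNonpos M) {c : ℝ} (hc : 0 ≤ c) :
    LogNormInfNonpos (c • M) := fun k => by
  simp only [smul_apply, smul_eq_mul, abs_mul, abs_of_nonneg hc, ← Finset.mul_sum, ← mul_add]
  exact mul_nonpos_of_nonneg_of_nonpos hc (hM k)

theorem sum {ι : Type*} (s : Finset ι) {M : ι → Matrix m m ℝ}
    (hM : ∀ i ∈ s, LogNormInfNonpos (M i)) : LogNormInfNonpos (∑ i ∈ s, M i) :=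
  Finset.sum_induction M LogNormInfNonpos (fun _ _ => add) zero hM

theorem sum_ite_smul (A : Matrix n ν ℕ) {ρ : n → ν → ℝ}
    {Λ : n → ν → Matrix m m ℝ} (hρ : ∀ i j, 0 < A i j → 0 ≤ ρ i j)
    (hΛ : ∀ i j, 0 < A i j → LogNormInfNonpos (Λ i j)) :
    LogNormInfNonpos (∑ i, ∑ j, if 0 < A i j then ρ i j • Λ i j else 0) :=
  sum _ fun i _ => sum _ fun j _ => by
    split_ifs with hA
    · exact (hΛ i j hA).smul (hρ i j hA)
    · exact zero

theorem sum_abs_one_add_smul_le {M : Matrix m m ℝ} (hM : LogNormInfNonpos M) {h : ℝ}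
    (h0 : 0 ≤ h) {k : m} (hdiag : 0 ≤ 1 + h * M k k) : ∑ j, |(1 + h • M) k j| ≤ 1 := by
  have hoff : ∀ j ∈ Finset.univ.erase k, |(1 + h • M) k j| = h * |M k j| := fun j hj => by
    rw [add_apply, one_apply_ne (Finset.ne_of_mem_erase hj).symm, zero_add, smul_apply,
      smul_eq_mul, abs_mul, abs_of_nonneg h0]
  calc ∑ j, |(1 + h • M) k j|
      = |(1 + h • M) k k| + ∑ j ∈ Finset.univ.erase k, |(1 + h • M) k j| :=
        (Finset.add_sum_erase _ _ (Finset.mem_univ k)).symm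
    _ = 1 + h * (M k k + ∑ j ∈ Finset.univ.erase k, |M k j|) := by
        rw [Finset.sum_congr rfl hoff, ← Finset.mul_sum, add_apply, one_apply_eq, smul_apply,
          smul_eq_mul, abs_of_nonneg hdiag]
        ring
    _ ≤ 1 := by nlinarith [hM k]

theorem eventually_norm_one_add_smul_mulVec_le {M : Matrix m m ℝ} (hM : LogNormInfNonpos M) :
    ∀ᶠ h in 𝓝[>] (0 : ℝ), ∀ v : m → ℝ, ‖(1 + h • M) *ᵥ v‖ ≤ ‖v‖ := by
  have hdiag : ∀ k, ∀ᶠ h in 𝓝 (0 : ℝ), 0 < 1 + h * M k k := fun k => by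
    have : Tendsto (fun h : ℝ => 1 + h * M k k) (𝓝 0) (𝓝 1) :=
      (continuous_const.add (continuous_id.mul continuous_const)).tendsto' _ _ (by simp)
    exact this.eventually (lt_mem_nhds one_pos)
  filter_upwards [self_mem_nhdsWithin, nhdsWithin_le_nhds (eventually_all.2 hdiag)]
    with h (h0 : 0 < h) hdiag v
  simpa using norm_mulVec_le_of_sum_abs_le _ zero_le_one
    (fun k => hM.sum_abs_one_add_smul_le h0.le (hdiag k).le) v

end LogNormInfNonpos

theorem transpose_mulVec_mulVec_eq_zero (Γ : Matrix n ν ℝ) (D : Matrix n d ℝ)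
    (hD : ∀ k, (fun i => D i k) ∈ LinearMap.ker (mulVecLin Γᵀ)) (r : ν → ℝ) :
    Dᵀ *ᵥ (Γ *ᵥ r) = 0 := funext fun k => by
  have hk : Γᵀ *ᵥ (fun i => D i k) = 0 := hD k
  change (fun i => D i k) ⬝ᵥ Γ *ᵥ r = 0
  rw [dotProduct_mulVec, ← mulVec_transpose, hk, zero_dotProduct]

theorem mulVec_mul_mulVec_eq_sum (B : Matrix q n ℝ) (Γ : Matrix n ν ℝ) (P : Matrix ν n ℝ)
    (z : n → ℝ) :
    B *ᵥ ((Γ * P) *ᵥ z) = ∑ i, ∑ j, (P j i * z i) • (B *ᵥ fun k => Γ k j) := by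
  ext a
  simp only [mulVec, dotProduct, mul_apply, Finset.sum_apply, Pi.smul_apply, smul_eq_mul,
    Finset.sum_mul, Finset.mul_sum]
  rw [Finset.sum_comm]
  refine Finset.sum_congr rfl fun i _ => ?_
  rw [Finset.sum_comm]
  exact Finset.sum_congr rfl fun j _ => Finset.sum_congr rfl fun k _ => by ring

variable [Fintype q] [Fintype d] [DecidableEq n]

theorem smul_mulVec_eq_of_vecMulVec_single_eq {B : Matrix q n ℝ} {D : Matrix n d ℝ}
    {u : n → ℝ} {i : n} {Λ : Matrix q q ℝ} {Y : Matrix q d ℝ}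
    (hΛ : vecMulVec (B *ᵥ u) (Pi.single i 1) = Λ * B + Y * Dᵀ) {z : n → ℝ}
    (hz : Dᵀ *ᵥ z = 0) : z i • (B *ᵥ u) = Λ *ᵥ (B *ᵥ z) := by
  simpa [vecMulVec_mulVec, add_mulVec, ← mulVec_mulVec, hz] using congrArg (· *ᵥ z) hΛ

theorem mulVec_mul_mulVec_eq_of_factorization (A : Matrix n ν ℕ)
    {B : Matrix q n ℝ} {Γ : Matrix n ν ℝ} {P : Matrix ν n ℝ} {D : Matrix n d ℝ}
    {Λ : n → ν → Matrix q q ℝ} (hP : ∀ i j, A i j = 0 → P j i = 0)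
    (hΛ : ∀ i j, 0 < A i j → ∃ Y : Matrix q d ℝ,
      vecMulVec (B *ᵥ fun k => Γ k j) (Pi.single i 1) = Λ i j * B + Y * Dᵀ)
    {z : n → ℝ} (hz : Dᵀ *ᵥ z = 0) :
    B *ᵥ ((Γ * P) *ᵥ z) = (∑ i, ∑ j, if 0 < A i j then P j i • Λ i j else 0) *ᵥ (B *ᵥ z) := by
  simp only [mulVec_mul_mulVec_eq_sum, sum_mulVec]
  refine Finset.sum_congr rfl fun i _ => Finset.sum_congr rfl fun j _ => ?_
  split_ifs with hA
  · obtain ⟨Y, hY⟩ := hΛ i j hA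
    rw [smul_mulVec, ← smul_mulVec_eq_of_vecMulVec_single_eq hY hz, mul_smul]
  · rw [hP i j (Nat.eq_zero_of_not_pos hA), zero_mul, zero_smul, zero_mulVec]

variable [DecidableEq q]

theorem mulVec_one_add_smul_mulVec {B : Matrix q n ℝ} {J : Matrix n n ℝ}
    {M : Matrix q q ℝ} {z : n → ℝ} (hJ : B *ᵥ (J *ᵥ z) = M *ᵥ (B *ᵥ z)) (h : ℝ) :
    B *ᵥ ((1 + h • J) *ᵥ z) = (1 + h • M) *ᵥ (B *ᵥ z) := by
  rw [add_mulVec, one_mulVec, smul_mulVec, mulVec_add, mulVec_smul, hJ, add_mulVec,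
    one_mulVec, smul_mulVec]

end Matrix

theorem stmt18_general {n ν q d : ℕ} (A : Matrix (Fin n) (Fin ν) ℕ)
    (Γ : Matrix (Fin n) (Fin ν) ℝ)
    (Bm : Matrix (Fin q) (Fin n) ℝ) (D : Matrix (Fin n) (Fin d) ℝ)
    (hD2 : Submodule.span ℝ (Set.range (fun k : Fin d => (fun i : Fin n => D i k)))
        = LinearMap.ker (Matrix.mulVecLin Γ.transpose))
    (Λt : Fin n → Fin ν → Matrix (Fin q) (Fin q) ℝ)
    (hΛ : ∀ i j, 0 < A i j →
      (∀ k, Λt i j k k + ∑ k' ∈ Finset.univ.erase k, |Λt i j k k'| ≤ 0) ∧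
      ∃ Y : Matrix (Fin q) (Fin d) ℝ,
        Matrix.vecMulVec (Bm.mulVec (fun k => Γ k j)) (Pi.single i 1)
          = Λt i j * Bm + Y * D.transpose) :
    ∀ R, IsAdmissible A R → ∀ x : Fin n → ℝ, (∀ i, 0 ≤ x i) →
      (Filter.limsup (fun h : ℝ =>
          (sSup {a : ℝ | ∃ z : Fin n → ℝ, (∃ r : Fin ν → ℝ, Γ.mulVec r = z) ∧
              ‖Bm.mulVec z‖ ≤ 1 ∧
              a = ‖Bm.mulVec ((1 + h • (Γ * Matrix.of fun (j : Fin ν) (i : Fin n) =>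
                pd R x j i)).mulVec z)‖} - 1) / h)
          (nhdsWithin 0 (Set.Ioi 0)) ≤ 0)
      ∧ ∀ h : ℝ, 0 ≤ h → ∀ z : Fin n → ℝ, (∃ r : Fin ν → ℝ, Γ.mulVec r = z) →
          ‖Bm.mulVec ((1 + h • (Γ * Matrix.of fun (j : Fin ν) (i : Fin n) =>
              pd R x j i)).mulVec z)‖ ≤
            opNormInf (1 + h • ∑ i : Fin n, ∑ j : Fin ν,
              (if 0 < A i j then pd R x j i • Λt i j else 0)) * ‖Bm.mulVec z‖ := by
  intro R hR x hx
  set J := Γ * Matrix.of fun (j : Fin ν) (i : Fin n) => pd R x j i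
  set M := ∑ i : Fin n, ∑ j : Fin ν, (if 0 < A i j then pd R x j i • Λt i j else 0)
  have hM : M.LogNormInfNonpos := Matrix.LogNormInfNonpos.sum_ite_smul A
    (fun i j hA => hR.deriv_nonneg x hx i j hA) (fun i j hA => (hΛ i j hA).1)
  have hD : ∀ k, (fun i => D i k) ∈ LinearMap.ker (Matrix.mulVecLin Γ.transpose) :=
    fun k => hD2 ▸ Submodule.subset_span ⟨k, rfl⟩
  have hBJ : ∀ z, (∃ r, Γ.mulVec r = z) → ∀ h : ℝ,
      Bm.mulVec ((1 + h • J).mulVec z) = (1 + h • M).mulVec (Bm.mulVec z) := by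
    rintro _ ⟨r, rfl⟩
    exact Matrix.mulVec_one_add_smul_mulVec <| Matrix.mulVec_mul_mulVec_eq_of_factorization A
      (fun i j hA => hR.deriv_zero x hx i j hA) (fun i j hA => (hΛ i j hA).2)
      (Matrix.transpose_mulVec_mulVec_eq_zero Γ D hD r)
  refine ⟨?_, fun h _ z hz => hBJ z hz h ▸ Matrix.norm_mulVec_le_opNormInf _ _⟩
  -- The quotient is unbounded below when `B` vanishes on `im Γ`, so `limsup_le_of_le` does not
  -- apply; `Real.sInf_nonpos'` copes with the junk value `sInf = 0` of an unbounded set.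
  rw [limsup_eq]
  refine Real.sInf_nonpos' ⟨0, ?_, le_rfl⟩
  filter_upwards [self_mem_nhdsWithin, hM.eventually_norm_one_add_smul_mulVec_le]
    with h (hh : 0 < h) hcontr
  refine div_nonpos_of_nonpos_of_nonneg (sub_nonpos.2 (Real.sSup_le ?_ zero_le_one)) hh.le
  rintro _ ⟨z, hz, hBz, rfl⟩
  exact (hBJ z hz h ▸ hcontr _).trans hBz

/-- Contraction theorem, part 2: if `B (Γ e_{j_ℓ}) e_{i_ℓ}ᵀ = Λ̃^ℓ B + Y^ℓ Dᵀ` with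
`μ_∞(Λ̃^ℓ) ≤ 0` (columns of `D` a basis of `ker Γᵀ`), then the species-space Jacobian
`J₂(x) = Γ ∂R/∂x(x)` has nonpositive logarithmic norm with respect to the semi-norm
`z ↦ ‖Bz‖_∞` restricted to `im Γ`, together with the explicit `ℓ∞`-norm bound. -/
theorem stmt18 {n ν q d : ℕ} (A : Matrix (Fin n) (Fin ν) ℕ)
    (Γ : Matrix (Fin n) (Fin ν) ℝ)
    (Bm : Matrix (Fin q) (Fin n) ℝ) (D : Matrix (Fin n) (Fin d) ℝ)
    (hD1 : LinearIndependent ℝ (fun k : Fin d => (fun i : Fin n => D i k)))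
    (hD2 : Submodule.span ℝ (Set.range (fun k : Fin d => (fun i : Fin n => D i k)))
        = LinearMap.ker (Matrix.mulVecLin Γ.transpose))
    (Λt : Fin n → Fin ν → Matrix (Fin q) (Fin q) ℝ)
    (hΛ : ∀ i j, 0 < A i j →
      (∀ k, Λt i j k k + ∑ k' ∈ Finset.univ.erase k, |Λt i j k k'| ≤ 0) ∧
      ∃ Y : Matrix (Fin q) (Fin d) ℝ,
        Matrix.vecMulVec (Bm.mulVec (fun k => Γ k j)) (Pi.single i 1)
          = Λt i j * Bm + Y * D.transpose) :
    ∀ R, IsAdmissible A R → ∀ x : Fin n → ℝ, (∀ i, 0 ≤ x i) →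
      (Filter.limsup (fun h : ℝ =>
          (sSup {a : ℝ | ∃ z : Fin n → ℝ, (∃ r : Fin ν → ℝ, Γ.mulVec r = z) ∧
              ‖Bm.mulVec z‖ ≤ 1 ∧
              a = ‖Bm.mulVec ((1 + h • (Γ * Matrix.of fun (j : Fin ν) (i : Fin n) =>
                pd R x j i)).mulVec z)‖} - 1) / h)
          (nhdsWithin 0 (Set.Ioi 0)) ≤ 0)
      ∧ ∀ h : ℝ, 0 ≤ h → ∀ z : Fin n → ℝ, (∃ r : Fin ν → ℝ, Γ.mulVec r = z) →
          ‖Bm.mulVec ((1 + h • (Γ * Matrix.of fun (j : Fin ν) (i : Fin n) =>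
              pd R x j i)).mulVec z)‖ ≤
            opNormInf (1 + h • ∑ i : Fin n, ∑ j : Fin ν,
              (if 0 < A i j then pd R x j i • Λt i j else 0)) * ‖Bm.mulVec z‖ :=
  stmt18_general A Γ Bm D hD2 Λt hΛ
end
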